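/- The anisotropic bracket ⟨x⟩ := |(1,x)|_{(1,a⃗)} is a C^∞ function on ℝⁿ, and for every α ∈ ℝ and multi-index γ ∈ ℕ₀ⁿ there are constants c_γ, c_γ′ > 0 such that |∂^γ ⟨ξ⟩^α| ≤ c_γ ⟨ξ⟩^{α − a⃗·γ} ≤ c_γ′ (1+|ξ|_{a⃗})^{α − a⃗·γ} for all ξ ∈ ℝⁿ. -/

import Mathlib

open MeasureTheory Real Set
open scoped ENNReal NNReal BigOperators SchwartzMap

noncomputable section

/-- Anisotropic dilation: `(adil a l x) i = l ^ (a i) * x i`. -/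
def adil {n : ℕ} (a : Fin n → ℝ) (l : ℝ) (x : Fin n → ℝ) : Fin n → ℝ :=
  fun i => l ^ (a i) * x i

/-- Euclidean norm on `Fin n → ℝ`. -/
def enorm2 {n : ℕ} (x : Fin n → ℝ) : ℝ := Real.sqrt (∑ i, (x i) ^ 2)

/-- Anisotropic quasi-homogeneous norm. -/
def anorm {n : ℕ} (a : Fin n → ℝ) (x : Fin n → ℝ) : ℝ :=
  if x = 0 then 0 else sInf {l : ℝ | 0 < l ∧ enorm2 (adil a l⁻¹ x) = 1}

/-- One–dimensional `L^p` norm (`ℝ≥0∞`-valued). -/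
def lpnorm1 (p : ℝ≥0∞) (g : ℝ → ℝ≥0∞) : ℝ≥0∞ :=
  if p = ∞ then essSup g volume
  else (∫⁻ t, (g t) ^ p.toReal) ^ (1 / p.toReal)

/-- Mixed Lebesgue norm: iterated `L^{p₁},…,L^{pₙ}` norm, innermost variable first. -/
def mixedNorm : {n : ℕ} → (Fin n → ℝ≥0∞) → ((Fin n → ℝ) → ℝ≥0∞) → ℝ≥0∞
  | 0, _, f => f (fun i => i.elim0)
  | (_ + 1), p, f =>
      mixedNorm (fun i => p i.succ)
        (fun y => lpnorm1 (p 0) (fun t => f (Fin.cons t y)))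

/-- Mixed norm of a complex-valued function. -/
def mixedNormC {n : ℕ} (p : Fin n → ℝ≥0∞) (f : (Fin n → ℝ) → ℂ) : ℝ≥0∞ :=
  mixedNorm p (fun x => (‖f x‖₊ : ℝ≥0∞))

/-- Mixed norm of `f` restricted to a set `R`. -/
def mixedNormOn {n : ℕ} (p : Fin n → ℝ≥0∞) (R : Set (Fin n → ℝ))
    (f : (Fin n → ℝ) → ℂ) : ℝ≥0∞ :=
  mixedNorm p (R.indicator fun x => (‖f x‖₊ : ℝ≥0∞))

/-- The punctured rectangle `[-2,2]ⁿ \ (-1/2,1/2)ⁿ`. -/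
def punctRect (n : ℕ) : Set (Fin n → ℝ) :=
  {x | ∀ i, |x i| ≤ 2} \ {x | ∀ i, |x i| < 1 / 2}

/-- The anisotropic rectangles `R_j`. -/
def Rset {n : ℕ} (a : Fin n → ℝ) (j : ℕ) : Set (Fin n → ℝ) :=
  if j = 0 then adil a 2 '' {x | ∀ i, |x i| ≤ 2}
  else adil a ((2 : ℝ) ^ j) '' punctRect n

/-- Partial derivative in the `i`-th coordinate. -/
def pd {n : ℕ} {E : Type*} [NormedAddCommGroup E] [NormedSpace ℝ E] (i : Fin n)
    (f : (Fin n → ℝ) → E) : (Fin n → ℝ) → E :=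
  fun x => deriv (fun t => f (Function.update x i t)) (x i)

/-- Iterated partial derivative `∂^γ` for a multi-index `γ`. -/
def pdm {n : ℕ} {E : Type*} [NormedAddCommGroup E] [NormedSpace ℝ E] (γ : Fin n → ℕ)
    (f : (Fin n → ℝ) → E) : (Fin n → ℝ) → E :=
  (List.finRange n).foldr (fun i g => (pd i)^[γ i] g) f

/-- Fourier transform `f̂(ξ) = ∫ f(x) e^{-i x·ξ} dx`. -/
def FT {n : ℕ} (f : (Fin n → ℝ) → ℂ) (ξ : Fin n → ℝ) : ℂ :=
  ∫ x : Fin n → ℝ, Complex.exp (-(Complex.I) * (∑ i, x i * ξ i)) * f x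

/-- Inverse Fourier transform. -/
def FTinv {n : ℕ} (f : (Fin n → ℝ) → ℂ) (x : Fin n → ℝ) : ℂ :=
  ((2 * Real.pi : ℝ) ^ n : ℝ)⁻¹ •
    ∫ ξ : Fin n → ℝ, Complex.exp (Complex.I * (∑ i, x i * ξ i)) * f ξ

/-- Fourier multiplier operator. -/
def Tm {n : ℕ} (m : (Fin n → ℝ) → ℂ) (f : (Fin n → ℝ) → ℂ) : (Fin n → ℝ) → ℂ :=
  FTinv (fun ξ => m ξ * FT f ξ)

/-- Convolution. -/
def convF {n : ℕ} (f g : (Fin n → ℝ) → ℂ) (x : Fin n → ℝ) : ℂ :=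
  ∫ y : Fin n → ℝ, f y * g (x - y)

/-- Hardy–Littlewood maximal operator in the `k`-th variable. -/
def M1 {n : ℕ} (k : Fin n) (f : (Fin n → ℝ) → ℝ≥0∞) (x : Fin n → ℝ) : ℝ≥0∞ :=
  ⨆ (c : ℝ) (d : ℝ) (_ : c < d) (_ : x k ∈ Set.Icc c d),
    (ENNReal.ofReal (d - c))⁻¹ * ∫⁻ t in Set.Icc c d, f (Function.update x k t)

/-- Iterated maximal operator `𝓜_{r⃗}`. -/
def MIt {n : ℕ} (r : Fin n → ℝ) (f : (Fin n → ℝ) → ℝ≥0∞) : (Fin n → ℝ) → ℝ≥0∞ :=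
  (List.finRange n).foldl
    (fun g k => fun x => (M1 k (fun y => (g y) ^ (r k)) x) ^ (1 / r k)) f

/-- `μ_k = min (p 0, …, p k)`. -/
def muv {n : ℕ} (p : Fin n → ℝ) (k : Fin n) : ℝ :=
  (Finset.Iic k).inf' ⟨k, Finset.mem_Iic.2 le_rfl⟩ p

/-- Admissible exponent vector: `1 ≤ tₙ ≤ … ≤ t₁ ≤ 2`. -/
def Admissible {n : ℕ} (t : Fin n → ℝ) : Prop :=
  (∀ k, 1 ≤ t k ∧ t k ≤ 2) ∧ ∀ k l : Fin n, k ≤ l → t l ≤ t k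

/-- The Hörmander-type mixed-norm multiplier condition `m ∈ 𝓐(α, t⃗, N)`. -/
def Acond {n : ℕ} (a : Fin n → ℝ) (α : ℝ) (t : Fin n → ℝ) (N : ℕ)
    (m : (Fin n → ℝ) → ℂ) : Prop :=
  ∃ C : ℝ≥0∞, C ≠ ∞ ∧ ∀ γ : Fin n → ℕ, (∑ i, γ i) ≤ N → ∀ j : ℕ,
    ENNReal.ofReal ((2 : ℝ) ^ (-(j : ℝ) * α) * (2 : ℝ) ^ ((j : ℝ) * ∑ i, a i * γ i) *
        (2 : ℝ) ^ (-(j : ℝ) * ∑ i, a i / t i)) *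
      mixedNormOn (fun i => ENNReal.ofReal (t i)) (Rset a j) (pdm γ m) ≤ C

/-- `ℓ^q` norm of a sequence, `q ∈ (0,∞]`. -/
def lqSeq (q : ℝ≥0∞) (u : ℕ → ℝ≥0∞) : ℝ≥0∞ :=
  if q = ∞ then ⨆ j, u j else (∑' j, (u j) ^ q.toReal) ^ (1 / q.toReal)

/-- The Littlewood–Paley family `φ_j`, `φ_j(x) = 2^{νj} φ(2^{ja⃗}x)` for `j ≥ 1`. -/
def phifam {n : ℕ} (a : Fin n → ℝ) (φ₀ φ : (Fin n → ℝ) → ℂ) : ℕ → (Fin n → ℝ) → ℂ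
  | 0 => φ₀
  | (j + 1) => fun x =>
      ((2 : ℝ) ^ ((j + 1 : ℕ) * (∑ i, a i)) : ℝ) • φ (adil a ((2 : ℝ) ^ (j + 1 : ℕ)) x)

/-- Anisotropic mixed-norm Besov quasi-norm of `f`, w.r.t. the family `φfam`. -/
def besovNorm {n : ℕ} (s : ℝ) (p : Fin n → ℝ≥0∞) (q : ℝ≥0∞)
    (φfam : ℕ → (Fin n → ℝ) → ℂ) (f : (Fin n → ℝ) → ℂ) : ℝ≥0∞ :=
  lqSeq q (fun j => ENNReal.ofReal ((2 : ℝ) ^ ((j : ℝ) * s)) * mixedNormC p (convF (φfam j) f))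

/-- The anisotropic bracket `⟨x⟩ = |(1,x)|_{(1,a⃗)}`. -/
def abrack {n : ℕ} (a : Fin n → ℝ) (x : Fin n → ℝ) : ℝ :=
  anorm (Fin.cons 1 a) (Fin.cons 1 x)

end


noncomputable section
namespace Aux16
variable {m : ℕ}

def Fq (w : Fin m → ℝ) (l : ℝ) (y : Fin m → ℝ) : ℝ := ∑ i, (l ^ (2 * w i))⁻¹ * y i ^ 2

lemma enorm2_eq_one_iff {w : Fin m → ℝ} {l : ℝ} (hl : 0 < l) (y : Fin m → ℝ) :
    enorm2 (adil w l⁻¹ y) = 1 ↔ Fq w l y = 1 := by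
  have h : ∀ i, (l⁻¹ ^ (w i) * y i) ^ 2 = (l ^ (2 * w i))⁻¹ * y i ^ 2 := by
    intro i
    rw [mul_pow, sq (l⁻¹ ^ w i), ← Real.rpow_add (inv_pos.2 hl),
      show w i + w i = 2 * w i by ring, Real.inv_rpow hl.le]
  unfold enorm2 adil Fq
  simp_rw [h]
  exact Real.sqrt_eq_one

lemma Fq_strictAnti {w : Fin m → ℝ} (hw : ∀ i, 1 ≤ w i) {y : Fin m → ℝ} (hy : y ≠ 0)
    {l l' : ℝ} (hl : 0 < l) (hll : l < l') : Fq w l' y < Fq w l y := by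
  have hl' : 0 < l' := hl.trans hll
  obtain ⟨i₀, hi₀⟩ : ∃ i, y i ≠ 0 := by
    by_contra h; push_neg at h; exact hy (funext h)
  apply Finset.sum_lt_sum
  · intro i _
    have h1 : l ^ (2 * w i) ≤ l' ^ (2 * w i) :=
      Real.rpow_le_rpow hl.le hll.le (by nlinarith [hw i])
    have h2 : (l' ^ (2 * w i))⁻¹ ≤ (l ^ (2 * w i))⁻¹ :=
      inv_anti₀ (Real.rpow_pos_of_pos hl _) h1
    exact mul_le_mul_of_nonneg_right h2 (by positivity)
  · refine ⟨i₀, Finset.mem_univ _, ?_⟩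
    have h1 : l ^ (2 * w i₀) < l' ^ (2 * w i₀) :=
      Real.rpow_lt_rpow hl.le hll (by nlinarith [hw i₀])
    have h2 : (l' ^ (2 * w i₀))⁻¹ < (l ^ (2 * w i₀))⁻¹ :=
      inv_strictAnti₀ (Real.rpow_pos_of_pos hl _) h1
    exact mul_lt_mul_of_pos_right h2 (by positivity)

lemma exists_root {w : Fin m → ℝ} (hw : ∀ i, 1 ≤ w i) {y : Fin m → ℝ} (hy : y ≠ 0) :
    ∃ l, 0 < l ∧ Fq w l y = 1 := by
  obtain ⟨i₀, hi₀⟩ : ∃ i, y i ≠ 0 := by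
    by_contra h; push_neg at h; exact hy (funext h)
  set s : ℝ := ∑ i, y i ^ 2 with hs
  have hspos : 0 < s := by
    apply Finset.sum_pos' (fun i _ => by positivity) ⟨i₀, Finset.mem_univ _, by positivity⟩
  set l₁ : ℝ := min 1 (Real.sqrt s) with hl₁def
  set l₂ : ℝ := max 1 (Real.sqrt s) with hl₂def
  have hl₁pos : 0 < l₁ := lt_min one_pos (Real.sqrt_pos.2 hspos)
  have hl₂pos : 0 < l₂ := lt_of_lt_of_le hl₁pos min_le_max
  have hsq : ∀ t : ℝ, 0 ≤ t → Real.sqrt t ^ (2:ℝ) = t := by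
    intro t ht
    rw [show (2:ℝ) = ((2:ℕ):ℝ) by norm_num, Real.rpow_natCast]
    exact Real.sq_sqrt ht
  have hF1 : 1 ≤ Fq w l₁ y := by
    have h2 : (l₁ ^ (2:ℝ))⁻¹ * s ≤ Fq w l₁ y := by
      unfold Fq
      rw [hs, Finset.mul_sum]
      refine Finset.sum_le_sum (fun i _ => ?_)
      have hle : l₁ ^ (2 * w i) ≤ l₁ ^ (2:ℝ) :=
        Real.rpow_le_rpow_of_exponent_ge hl₁pos (min_le_left _ _) (by nlinarith [hw i])
      exact mul_le_mul_of_nonneg_right (inv_anti₀ (Real.rpow_pos_of_pos hl₁pos _) hle)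
        (by positivity)
    have h3 : 1 ≤ (l₁ ^ (2:ℝ))⁻¹ * s := by
      have hle : l₁ ^ (2:ℝ) ≤ s := by
        calc l₁ ^ (2:ℝ) ≤ (Real.sqrt s) ^ (2:ℝ) :=
              Real.rpow_le_rpow hl₁pos.le (min_le_right _ _) (by norm_num)
          _ = s := hsq s hspos.le
      rw [le_inv_mul_iff₀ (Real.rpow_pos_of_pos hl₁pos _), mul_one]
      exact hle
    linarith
  have hF2 : Fq w l₂ y ≤ 1 := by
    have h2 : Fq w l₂ y ≤ (l₂ ^ (2:ℝ))⁻¹ * s := by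
      unfold Fq
      rw [hs, Finset.mul_sum]
      refine Finset.sum_le_sum (fun i _ => ?_)
      have hle : l₂ ^ (2:ℝ) ≤ l₂ ^ (2 * w i) :=
        Real.rpow_le_rpow_of_exponent_le (le_max_left _ _) (by nlinarith [hw i])
      exact mul_le_mul_of_nonneg_right (inv_anti₀ (Real.rpow_pos_of_pos hl₂pos _) hle)
        (by positivity)
    have h3 : (l₂ ^ (2:ℝ))⁻¹ * s ≤ 1 := by
      have hle : s ≤ l₂ ^ (2:ℝ) := by
        calc s = (Real.sqrt s) ^ (2:ℝ) := (hsq s hspos.le).symm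
          _ ≤ l₂ ^ (2:ℝ) := Real.rpow_le_rpow (Real.sqrt_nonneg _) (le_max_right _ _) (by norm_num)
      rw [inv_mul_le_one₀ (Real.rpow_pos_of_pos hl₂pos _)]
      exact hle
    linarith
  have hcont : ContinuousOn (fun l => Fq w l y) (Set.Icc l₁ l₂) := by
    apply continuousOn_finset_sum
    intro i _
    apply ContinuousOn.mul _ continuousOn_const
    apply ContinuousOn.inv₀
    · intro x hx
      exact (Real.continuousAt_rpow_const x (2 * w i)
        (Or.inl (ne_of_gt (lt_of_lt_of_le hl₁pos hx.1)))).continuousWithinAt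
    · intro x hx
      exact ne_of_gt (Real.rpow_pos_of_pos (lt_of_lt_of_le hl₁pos hx.1) _)
  obtain ⟨l, hl, hFl⟩ := intermediate_value_Icc' min_le_max hcont ⟨hF2, hF1⟩
  exact ⟨l, lt_of_lt_of_le hl₁pos hl.1, hFl⟩

lemma anorm_eq {w : Fin m → ℝ} (hw : ∀ i, 1 ≤ w i) {y : Fin m → ℝ} (hy : y ≠ 0)
    {l : ℝ} (hl : 0 < l) (h : Fq w l y = 1) : anorm w y = l := by
  have hset : {l' : ℝ | 0 < l' ∧ enorm2 (adil w l'⁻¹ y) = 1} = {l} := by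
    ext l'
    simp only [Set.mem_setOf_eq, Set.mem_singleton_iff]
    constructor
    · rintro ⟨hl', h'⟩
      rw [enorm2_eq_one_iff hl'] at h'
      by_contra hne
      rcases lt_or_gt_of_ne hne with hlt | hgt
      · have := Fq_strictAnti hw hy hl' hlt; rw [h, h'] at this; exact lt_irrefl _ this
      · have := Fq_strictAnti hw hy hl hgt; rw [h, h'] at this; exact lt_irrefl _ this
    · rintro rfl
      exact ⟨hl, (enorm2_eq_one_iff hl y).2 h⟩
  rw [anorm, if_neg hy, hset, csInf_singleton]

lemma anorm_root {w : Fin m → ℝ} (hw : ∀ i, 1 ≤ w i) {y : Fin m → ℝ} (hy : y ≠ 0) :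
    0 < anorm w y ∧ Fq w (anorm w y) y = 1 := by
  obtain ⟨l, hl, hFl⟩ := exists_root hw hy
  rw [anorm_eq hw hy hl hFl]
  exact ⟨hl, hFl⟩


lemma adil_ne_zero {w : Fin m → ℝ} {y : Fin m → ℝ} (hy : y ≠ 0) {c : ℝ} (hc : 0 < c) :
    adil w c y ≠ 0 := by
  obtain ⟨i₀, hi₀⟩ : ∃ i, y i ≠ 0 := by
    by_contra h; push_neg at h; exact hy (funext h)
  intro h
  have := congrFun h i₀
  simp only [adil, Pi.zero_apply] at this
  exact hi₀ ((mul_eq_zero.1 this).resolve_left (ne_of_gt (Real.rpow_pos_of_pos hc _)))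

lemma Fq_adil {w : Fin m → ℝ} (l c : ℝ) (hl : 0 < l) (hc : 0 < c) (y : Fin m → ℝ) :
    Fq w (c * l) (adil w c y) = Fq w l y := by
  unfold Fq adil
  refine Finset.sum_congr rfl (fun i _ => ?_)
  have h1 : (c * l) ^ (2 * w i) = c ^ (2 * w i) * l ^ (2 * w i) :=
    Real.mul_rpow hc.le hl.le
  have h2 : (c ^ (w i)) ^ 2 = c ^ (2 * w i) := by
    rw [sq, ← Real.rpow_add hc, show w i + w i = 2 * w i by ring]
  have hcp : (0:ℝ) < c ^ (2 * w i) := Real.rpow_pos_of_pos hc _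
  rw [mul_pow, h1, h2, mul_inv]
  field_simp

lemma anorm_adil_eq {w : Fin m → ℝ} (hw : ∀ i, 1 ≤ w i) {y : Fin m → ℝ} (hy : y ≠ 0)
    {c : ℝ} (hc : 0 < c) : anorm w (adil w c y) = c * anorm w y := by
  obtain ⟨hpos, hF⟩ := anorm_root hw hy
  exact anorm_eq hw (adil_ne_zero hy hc) (by positivity)
    (by rw [Fq_adil _ _ hpos hc]; exact hF)


lemma contDiffAt_Fq {w : Fin m → ℝ} {p₀ : ℝ × (Fin m → ℝ)} (hp : 0 < p₀.1) :
    ContDiffAt ℝ (⊤:ℕ∞) (fun p : ℝ × (Fin m → ℝ) => Fq w p.1 p.2) p₀ := by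
  unfold Fq
  apply ContDiffAt.sum
  intro i _
  have h1 : ContDiffAt ℝ (⊤:ℕ∞) (fun p : ℝ × (Fin m → ℝ) => (p.1 ^ (2 * w i))⁻¹) p₀ :=
    ContDiffAt.inv
      ((Real.contDiffAt_rpow_const_of_ne (ne_of_gt hp)).comp p₀ contDiffAt_fst)
      (ne_of_gt (Real.rpow_pos_of_pos hp _))
  have h2 : ContDiffAt ℝ (⊤:ℕ∞) (fun p : ℝ × (Fin m → ℝ) => p.2 i ^ 2) p₀ :=
    (((contDiff_apply ℝ ℝ i).contDiffAt).comp p₀ contDiffAt_snd).pow 2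
  exact h1.mul h2

set_option maxHeartbeats 1000000 in
theorem contDiffAt_anorm {w : Fin m → ℝ} (hw : ∀ i, 1 ≤ w i) {y₀ : Fin m → ℝ}
    (hy₀ : y₀ ≠ 0) : ContDiffAt ℝ (⊤:ℕ∞) (anorm w) y₀ := by
  obtain ⟨hl₀, hF₀⟩ := anorm_root hw hy₀
  set l₀ : ℝ := anorm w y₀ with hl₀def
  set P := ℝ × (Fin m → ℝ)
  set p₀ : P := (l₀, y₀) with hp₀def
  obtain ⟨i₀, hi₀⟩ : ∃ i, y₀ i ≠ 0 := by
    by_contra h; push_neg at h; exact hy₀ (funext h)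
  -- the function and its smoothness
  set Fqp : P → ℝ := fun p => Fq w p.1 p.2 with hFqp
  have hFq : ContDiffAt ℝ (⊤:ℕ∞) Fqp p₀ := contDiffAt_Fq hl₀
  set G : P → P := fun p => (Fqp p, p.2) with hGdef
  have hG : ContDiffAt ℝ (⊤:ℕ∞) G p₀ := hFq.prodMk contDiffAt_snd
  -- the derivative of Fqp
  set DF : P →L[ℝ] ℝ := fderiv ℝ Fqp p₀ with hDFdef
  have hDF : HasFDerivAt Fqp DF p₀ := (hFq.differentiableAt (by simp)).hasFDerivAt
  -- the partial derivative in the l-direction is negative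
  set c : ℝ := DF (1, 0) with hcdef
  have hc : c < 0 := by
    have hcurve : HasDerivAt (fun t : ℝ => (t, y₀) : ℝ → P) ((1:ℝ), (0 : Fin m → ℝ)) l₀ :=
      (hasDerivAt_id l₀).prodMk (hasDerivAt_const l₀ y₀)
    have hcomp : HasDerivAt (fun t : ℝ => Fqp (t, y₀)) c l₀ :=
      by have := hDF.comp_hasDerivAt l₀ hcurve; exact this
    set S : ℝ := ∑ i, -(2 * w i * l₀ ^ (2 * w i - 1)) / (l₀ ^ (2 * w i)) ^ 2 * y₀ i ^ 2
      with hSdef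
    have hdirect : HasDerivAt (fun t : ℝ => Fqp (t, y₀)) S l₀ := by
      have : (fun t : ℝ => Fqp (t, y₀)) = fun t => ∑ i, (t ^ (2 * w i))⁻¹ * y₀ i ^ 2 := rfl
      rw [this, hSdef]
      apply HasDerivAt.fun_sum
      intro i _
      exact ((Real.hasDerivAt_rpow_const (Or.inl (ne_of_gt hl₀))).inv
        (ne_of_gt (Real.rpow_pos_of_pos hl₀ _))).mul_const _
    have hSc : S = c := by
      have := hdirect.unique hcomp
      exact this
    rw [← hSc, hSdef]
    have hzero : (0:ℝ) = ∑ _i : Fin m, (0:ℝ) := by simp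
    rw [hzero]
    apply Finset.sum_lt_sum
    · intro i _
      have h1 : (0:ℝ) < l₀ ^ (2 * w i - 1) := Real.rpow_pos_of_pos hl₀ _
      have h2 : (0:ℝ) < (l₀ ^ (2 * w i)) ^ 2 := by positivity
      have h3 : -(2 * w i * l₀ ^ (2 * w i - 1)) / (l₀ ^ (2 * w i)) ^ 2 ≤ 0 := by
        apply div_nonpos_of_nonpos_of_nonneg _ h2.le
        nlinarith [hw i]
      exact mul_nonpos_of_nonpos_of_nonneg h3 (sq_nonneg _)
    · refine ⟨i₀, Finset.mem_univ _, ?_⟩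
      have h1 : (0:ℝ) < l₀ ^ (2 * w i₀ - 1) := Real.rpow_pos_of_pos hl₀ _
      have h2 : (0:ℝ) < (l₀ ^ (2 * w i₀)) ^ 2 := by positivity
      have h3 : -(2 * w i₀ * l₀ ^ (2 * w i₀ - 1)) / (l₀ ^ (2 * w i₀)) ^ 2 < 0 := by
        apply div_neg_of_neg_of_pos _ h2
        nlinarith [hw i₀]
      have h4 : (0:ℝ) < y₀ i₀ ^ 2 := by positivity
      exact mul_neg_of_neg_of_pos h3 h4
  have hcne : c ≠ 0 := ne_of_lt hc
  -- the derivative of G as a continuous linear equivalence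
  set sndL : P →L[ℝ] (Fin m → ℝ) := ContinuousLinearMap.snd ℝ ℝ (Fin m → ℝ) with hsndL
  set fstL : P →L[ℝ] ℝ := ContinuousLinearMap.fst ℝ ℝ (Fin m → ℝ) with hfstL
  set A' : P →L[ℝ] P := DF.prod sndL with hA'
  set B₁ : P →L[ℝ] ℝ := c⁻¹ • (fstL - DF.comp ((0 : P →L[ℝ] ℝ).prod sndL)) with hB₁
  set B' : P →L[ℝ] P := B₁.prod sndL with hB'
  have hDFsplit : ∀ u : ℝ, ∀ v : Fin m → ℝ, DF (u, v) = u * c + DF (0, v) := by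
    intro u v
    have h1 : (u, v) = u • ((1:ℝ), (0 : Fin m → ℝ)) + ((0:ℝ), v) := by
      simp [Prod.ext_iff]
    rw [h1, DF.map_add, DF.map_smul]
    simp [hcdef, smul_eq_mul]
  have hleft : Function.LeftInverse B' A' := by
    intro p
    have h1 : A' p = (DF p, p.2) := rfl
    have h2 : B' (DF p, p.2) = (c⁻¹ * (DF p - DF (0, p.2)), p.2) := by
      simp [hB', hB₁, hfstL, hsndL, Prod.ext_iff]
      rfl
    rw [h1, h2]
    have h3 : DF p - DF (0, p.2) = p.1 * c := by
      have := hDFsplit p.1 p.2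
      rw [show ((p.1 : ℝ), p.2) = p from rfl] at this
      linarith
    rw [h3]
    ext
    · simp; field_simp
    · rfl
  have hright : Function.RightInverse B' A' := by
    intro q
    have h1 : B' q = (c⁻¹ * (q.1 - DF (0, q.2)), q.2) := by
      simp [hB', hB₁, hfstL, hsndL, Prod.ext_iff]
      rfl
    have h2 : ∀ p : P, A' p = (DF p, p.2) := fun _ => rfl
    rw [h1, h2]
    have h3 : DF (c⁻¹ * (q.1 - DF (0, q.2)), q.2) = q.1 := by
      rw [hDFsplit]
      field_simp
      ring
    rw [h3]
  set A : P ≃L[ℝ] P := ContinuousLinearEquiv.equivOfInverse A' B' hleft hright with hA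
  have hGs : HasFDerivAt G (A : P →L[ℝ] P) p₀ := by
    have : (A : P →L[ℝ] P) = A' := rfl
    rw [this, hA']
    exact hDF.prodMk (hasFDerivAt_snd)
  -- the local inverse
  have hone : ((⊤:ℕ∞) : WithTop ℕ∞) ≠ 0 := by simp
  set φ : P → P := hG.localInverse hGs hone with hφ
  have hφsmooth : ContDiffAt ℝ (⊤:ℕ∞) φ (G p₀) := hG.to_localInverse hGs hone
  have hGp₀ : G p₀ = ((1:ℝ), y₀) := by
    simp only [hGdef]
    rw [show Fqp p₀ = 1 from hF₀]
  set hS := hG.hasStrictFDerivAt' hGs hone with hSdef2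
  have hφeq : φ = hS.localInverse G A p₀ := rfl
  -- the candidate smooth representative
  set ψ : (Fin m → ℝ) → ℝ := fun y => (φ ((1:ℝ), y)).1 with hψ
  have hψsmooth : ContDiffAt ℝ (⊤:ℕ∞) ψ y₀ := by
    have hin : ContDiffAt ℝ (⊤:ℕ∞) (fun y : Fin m → ℝ => ((1:ℝ), y)) y₀ :=
      contDiffAt_const.prodMk contDiffAt_id
    have hcomp : ContDiffAt ℝ (⊤:ℕ∞) (fun y : Fin m → ℝ => φ ((1:ℝ), y)) y₀ := by
      apply ContDiffAt.comp
      · rw [← hGp₀] at *; exact hφsmooth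
      · exact hin
    exact contDiffAt_fst.comp y₀ hcomp
  -- anorm agrees with ψ near y₀
  have hagree : anorm w =ᶠ[nhds y₀] ψ := by
    have hcont1 : ContinuousAt (fun y : Fin m → ℝ => ((1:ℝ), y)) y₀ :=
      (continuous_const.prodMk continuous_id).continuousAt
    have htend : Filter.Tendsto (fun y : Fin m → ℝ => ((1:ℝ), y)) (nhds y₀) (nhds (G p₀)) := by
      rw [hGp₀]; exact hcont1
    have hri : ∀ᶠ q in nhds (G p₀), G (φ q) = q := by
      rw [hφeq]; exact hS.eventually_right_inverse
    have hev1 : ∀ᶠ y in nhds y₀, G (φ ((1:ℝ), y)) = ((1:ℝ), y) := htend.eventually hri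
    have hφcont : ContinuousAt φ (G p₀) := by
      rw [hφeq]; exact hS.localInverse_continuousAt
    have hφp₀ : φ (G p₀) = p₀ := by rw [hφeq]; exact hS.localInverse_apply_image
    have hval : (φ (G p₀)).1 = l₀ := by rw [hφp₀]
    have htendφ : Filter.Tendsto φ (nhds (G p₀)) (nhds p₀) := by
      have := hφcont.tendsto
      rwa [hφp₀] at this
    have htendg : Filter.Tendsto (fun y : Fin m → ℝ => (φ ((1:ℝ), y)).1) (nhds y₀)
        (nhds l₀) := by
      have h1 : Filter.Tendsto (fun p : P => p.1) (nhds p₀) (nhds l₀) := continuousAt_fst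
      exact h1.comp (htendφ.comp htend)
    have hev2 : ∀ᶠ y in nhds y₀, 0 < (φ ((1:ℝ), y)).1 :=
      htendg.eventually (eventually_gt_nhds hl₀)
    have hev3 : ∀ᶠ y in nhds y₀, y ≠ (0 : Fin m → ℝ) :=
      (isOpen_compl_singleton).eventually_mem hy₀
    filter_upwards [hev1, hev2, hev3] with y h1 h2 h3
    have e2 : (φ ((1:ℝ), y)).2 = y := congrArg Prod.snd h1
    have e1 : Fq w (φ ((1:ℝ), y)).1 ((φ ((1:ℝ), y)).2) = 1 := congrArg Prod.fst h1
    rw [e2] at e1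
    exact anorm_eq hw h3 h2 e1
  exact hψsmooth.congr_of_eventuallyEq hagree

variable {n : ℕ}

/-- Directional derivative along a basis vector. -/
def Dstep {m : ℕ} (j : Fin m) (W : (Fin m → ℝ) → ℝ) : (Fin m → ℝ) → ℝ :=
  fun y => fderiv ℝ W y (Pi.single j 1 : Fin m → ℝ)

/-- Smooth away from the origin. -/
def Csm {m : ℕ} (W : (Fin m → ℝ) → ℝ) : Prop :=
  ∀ y : Fin m → ℝ, y ≠ 0 → ContDiffAt ℝ (⊤:ℕ∞) W y

lemma Csm.dstep {m : ℕ} {W : (Fin m → ℝ) → ℝ} (hW : Csm W) (j : Fin m) :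
    Csm (Dstep j W) := by
  intro y hy
  have h1 : ContDiffAt ℝ (⊤:ℕ∞) (fderiv ℝ W) y := (hW y hy).fderiv_right (by simp)
  exact h1.clm_apply contDiffAt_const

lemma Csm.dstep_iter {m : ℕ} {W : (Fin m → ℝ) → ℝ} (hW : Csm W) (j : Fin m) (k : ℕ) :
    Csm ((Dstep j)^[k] W) := by
  induction k with
  | zero => exact hW
  | succ k ih => rw [Function.iterate_succ_apply']; exact ih.dstep j

/-- `pd` of a constant multiple. -/
lemma pd_const_mul {k : ℕ} (i : Fin k) (r : ℝ) (f : (Fin k → ℝ) → ℝ) :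
    pd i (fun x => r * f x) = fun x => r * pd i f x := by
  funext x
  exact deriv_const_mul_field r

/-- The affine curve fact: `A (update x i t) = A x + (t - x i) • (c ^ a i • eᵢ₊₁)`. -/
lemma curve_eq (a : Fin n → ℝ) (s c : ℝ) (x : Fin n → ℝ) (i : Fin n) (t : ℝ) :
    Fin.cons s (adil a c (Function.update x i t)) =
      Fin.cons s (adil a c x) + (t - x i) • (c ^ (a i) • (Pi.single i.succ 1 : Fin (n+1) → ℝ)) := by
  funext j
  refine Fin.cases ?_ (fun k => ?_) j
  · show s = s + (t - x i) • (c ^ (a i) • (Pi.single i.succ 1 : Fin (n+1) → ℝ)) 0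
    have h0 : (Pi.single i.succ 1 : Fin (n+1) → ℝ) 0 = 0 :=
      Pi.single_eq_of_ne (Fin.succ_ne_zero i).symm 1
    simp [h0]
  · show adil a c (Function.update x i t) k
      = adil a c x k + (t - x i) • (c ^ (a i) • (Pi.single i.succ 1 : Fin (n+1) → ℝ)) k.succ
    rcases eq_or_ne k i with rfl | hk
    · have h1 : (Pi.single k.succ 1 : Fin (n+1) → ℝ) k.succ = 1 := Pi.single_eq_same _ _
      simp only [adil, Function.update_self, Pi.smul_apply, h1, smul_eq_mul]
      ring
    · have h1 : (Pi.single i.succ 1 : Fin (n+1) → ℝ) k.succ = 0 :=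
        Pi.single_eq_of_ne (fun h => hk (Fin.succ_injective n h)) 1
      simp only [adil, Function.update_of_ne hk, Pi.smul_apply, h1, smul_eq_mul]
      ring

/-- Chain rule for `pd` through the affine map `x ↦ cons s (adil a c x)`. -/
lemma pd_comp_affine {a : Fin n → ℝ} {W : (Fin (n+1) → ℝ) → ℝ} {s c : ℝ}
    (i : Fin n) (x : Fin n → ℝ)
    (hW : DifferentiableAt ℝ W (Fin.cons s (adil a c x))) :
    pd i (fun x => W (Fin.cons s (adil a c x))) x =
      c ^ (a i) * Dstep i.succ W (Fin.cons s (adil a c x)) := by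
  set A : (Fin n → ℝ) → (Fin (n+1) → ℝ) := fun x => Fin.cons s (adil a c x) with hA
  set v : Fin (n+1) → ℝ := c ^ (a i) • (Pi.single i.succ 1 : Fin (n+1) → ℝ) with hv
  have hcurve : ∀ t, A (Function.update x i t) = A x + (t - x i) • v :=
    fun t => curve_eq a s c x i t
  have hd : HasDerivAt (fun t => A (Function.update x i t)) v (x i) := by
    have h1 : HasDerivAt (fun t : ℝ => A x + (t - x i) • v) v (x i) := by
      have h2 : HasDerivAt (fun t : ℝ => t - x i) 1 (x i) :=
        (hasDerivAt_id (x i)).sub_const (x i)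
      have h3 := h2.smul_const v
      rw [one_smul] at h3
      exact h3.const_add (A x)
    exact h1.congr_of_eventuallyEq (Filter.Eventually.of_forall hcurve)
  have hx : A (Function.update x i (x i)) = A x := by rw [Function.update_eq_self]
  have hWf : HasFDerivAt W (fderiv ℝ W (A x)) (A (Function.update x i (x i))) := by
    rw [hx]; exact hW.hasFDerivAt
  have hcomp : HasDerivAt (fun t => W (A (Function.update x i t)))
      (fderiv ℝ W (A x) v) (x i) := hWf.comp_hasDerivAt (x i) hd
  have hval : pd i (fun x => W (A x)) x = fderiv ℝ W (A x) v := hcomp.deriv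
  rw [hval, hv, (fderiv ℝ W (A x)).map_smul, smul_eq_mul]
  rfl


lemma cons_adil_ne_zero {a : Fin n → ℝ} {s c : ℝ} (hs : s ≠ 0) (x : Fin n → ℝ) :
    Fin.cons s (adil a c x) ≠ (0 : Fin (n+1) → ℝ) := by
  intro h
  exact hs (by simpa using congrFun h 0)

lemma pd_iter_const_mul {k : ℕ} (i : Fin k) (r : ℝ) (N : ℕ) (f : (Fin k → ℝ) → ℝ) :
    (pd i)^[N] (fun x => r * f x) = fun x => r * (pd i)^[N] f x := by
  induction N generalizing f with
  | zero => rfl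
  | succ N ih =>
      rw [Function.iterate_succ_apply, Function.iterate_succ_apply, pd_const_mul, ih]

lemma pd_iter_comp_affine {a : Fin n → ℝ} {W : (Fin (n+1) → ℝ) → ℝ} {s c : ℝ}
    (hW : Csm W) (hs : s ≠ 0) (i : Fin n) (N : ℕ) :
    (pd i)^[N] (fun x => W (Fin.cons s (adil a c x))) =
      fun x => (c ^ (a i)) ^ N * ((Dstep i.succ)^[N] W) (Fin.cons s (adil a c x)) := by
  induction N with
  | zero => simp
  | succ N ih =>
      rw [Function.iterate_succ_apply', ih, pd_const_mul]
      funext x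
      rw [pd_comp_affine i x (((hW.dstep_iter i.succ N) _ (cons_adil_ne_zero hs x)).differentiableAt
        (by simp))]
      rw [← Function.iterate_succ_apply' (Dstep i.succ)]
      ring

/-- Iterated directional-derivative operator associated to a multi-index. -/
def Dm (γ : Fin n → ℕ) (W : (Fin (n+1) → ℝ) → ℝ) : (Fin (n+1) → ℝ) → ℝ :=
  (List.finRange n).foldr (fun i g => (Dstep i.succ)^[γ i] g) W

lemma Csm.foldr {γ : Fin n → ℕ} {W : (Fin (n+1) → ℝ) → ℝ} (hW : Csm W)
    (L : List (Fin n)) : Csm (L.foldr (fun i g => (Dstep i.succ)^[γ i] g) W) := by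
  induction L with
  | nil => exact hW
  | cons i L ih => exact ih.dstep_iter i.succ (γ i)

lemma Csm.dm {γ : Fin n → ℕ} {W : (Fin (n+1) → ℝ) → ℝ} (hW : Csm W) : Csm (Dm γ W) :=
  hW.foldr _

lemma foldr_pd_comp_affine {a : Fin n → ℝ} {W : (Fin (n+1) → ℝ) → ℝ} {s c : ℝ}
    (γ : Fin n → ℕ) (hW : Csm W) (hs : s ≠ 0) (L : List (Fin n)) :
    L.foldr (fun i g => (pd i)^[γ i] g) (fun x => W (Fin.cons s (adil a c x))) =
      fun x => (L.map (fun i => (c ^ (a i)) ^ (γ i))).prod *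
        (L.foldr (fun i g => (Dstep i.succ)^[γ i] g) W) (Fin.cons s (adil a c x)) := by
  induction L with
  | nil => funext x; simp
  | cons i L ih =>
      rw [List.foldr_cons, ih, pd_iter_const_mul,
        pd_iter_comp_affine (hW.foldr L) hs i (γ i)]
      funext x
      rw [List.foldr_cons, List.map_cons, List.prod_cons]
      ring

lemma pdm_comp_affine {a : Fin n → ℝ} {W : (Fin (n+1) → ℝ) → ℝ} {s c : ℝ}
    (γ : Fin n → ℕ) (hW : Csm W) (hs : s ≠ 0) :
    pdm γ (fun x => W (Fin.cons s (adil a c x))) =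
      fun x => (∏ i, (c ^ (a i)) ^ (γ i)) * (Dm γ W) (Fin.cons s (adil a c x)) := by
  rw [pdm, foldr_pd_comp_affine γ hW hs]
  funext x
  rw [Dm, Fin.prod_univ_def]

lemma pdm_const_mul {k : ℕ} (γ : Fin k → ℕ) (r : ℝ) (f : (Fin k → ℝ) → ℝ) :
    pdm γ (fun x => r * f x) = fun x => r * pdm γ f x := by
  rw [pdm, pdm]
  induction (List.finRange k) generalizing f with
  | nil => rfl
  | cons i L ih => rw [List.foldr_cons, List.foldr_cons, ih, pd_iter_const_mul]

end Aux16

section AB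
open Aux16
variable {n : ℕ} (a : Fin n → ℝ) (ha : ∀ i, 1 ≤ a i)
lemma hb_ge (ha : ∀ i, 1 ≤ a i) : ∀ i, 1 ≤ (Fin.cons 1 a : Fin (n+1) → ℝ) i := by
  intro i
  refine Fin.cases ?_ (fun j => ?_) i <;> simp [ha]

lemma cons1_ne_zero (x : Fin n → ℝ) : (Fin.cons 1 x : Fin (n+1) → ℝ) ≠ 0 := by
  intro h
  have := congrFun h 0
  simp at this

lemma Fq_cons (l : ℝ) (x : Fin n → ℝ) :
    Fq (Fin.cons 1 a) l (Fin.cons 1 x) = (l ^ (2:ℝ))⁻¹ + Fq a l x := by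
  unfold Fq
  rw [Fin.sum_univ_succ]
  simp [Fin.cons_zero, Fin.cons_succ, mul_one]

include ha

lemma abrack_root (x : Fin n → ℝ) :
    0 < abrack a x ∧ Fq (Fin.cons 1 a) (abrack a x) (Fin.cons 1 x) = 1 :=
  anorm_root (hb_ge a ha) (cons1_ne_zero x)

lemma one_le_abrack (x : Fin n → ℝ) : 1 ≤ abrack a x := by
  obtain ⟨hpos, hF⟩ := abrack_root a ha x
  by_contra hlt
  push_neg at hlt
  have h1 : (1:ℝ) ≤ Fq (Fin.cons 1 a) 1 (Fin.cons 1 x) := by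
    rw [Fq_cons]
    have : (0:ℝ) ≤ Fq a 1 x := Finset.sum_nonneg (fun i _ => by positivity)
    simp [Real.one_rpow]
    linarith
  have := Fq_strictAnti (hb_ge a ha) (cons1_ne_zero x) hpos hlt
  rw [hF] at this
  linarith

lemma anorm_le_abrack (x : Fin n → ℝ) : anorm a x ≤ abrack a x := by
  rcases eq_or_ne x 0 with rfl | hx
  · rw [anorm, if_pos rfl]
    linarith [one_le_abrack a ha 0]
  · obtain ⟨hμpos, hμF⟩ := anorm_root ha hx
    obtain ⟨hlampos, hlamF⟩ := abrack_root a ha x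
    set μ := anorm a x
    set l := abrack a x
    by_contra hlt
    push_neg at hlt
    have hgt : 1 < Fq (Fin.cons 1 a) μ (Fin.cons 1 x) := by
      rw [Fq_cons, hμF]
      have : (0:ℝ) < (μ ^ (2:ℝ))⁻¹ := by positivity
      linarith
    rcases eq_or_lt_of_le hlt.le with heq | hlt'
    · rw [heq] at hlamF; rw [hlamF] at hgt; linarith
    · have := Fq_strictAnti (hb_ge a ha) (cons1_ne_zero x) hlampos hlt'
      rw [hlamF] at this
      linarith

lemma abrack_le (x : Fin n → ℝ) : abrack a x ≤ 2 * (1 + anorm a x) := by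
  rcases eq_or_ne x 0 with rfl | hx
  · have h1 : abrack a (0 : Fin n → ℝ) = 1 := by
      apply anorm_eq (hb_ge a ha) (cons1_ne_zero 0) one_pos
      rw [Fq_cons]
      unfold Fq
      simp [Real.one_rpow]
    rw [h1, anorm, if_pos rfl]
    norm_num
  · obtain ⟨hμpos, hμF⟩ := anorm_root ha hx
    obtain ⟨hlampos, hlamF⟩ := abrack_root a ha x
    set μ := anorm a x with hμ
    set L : ℝ := 2 * (1 + μ) with hL
    have hLpos : 0 < L := by positivity
    have hL2 : 2 ≤ L := by linarith
    have hL2μ : 2 * μ ≤ L := by linarith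
    -- Fq at L is < 1
    have hkey : Fq (Fin.cons 1 a) L (Fin.cons 1 x) < 1 := by
      rw [Fq_cons]
      have h1 : (L ^ (2:ℝ))⁻¹ ≤ 1/4 := by
        have : (4:ℝ) ≤ L ^ (2:ℝ) := by
          have := Real.rpow_le_rpow (by norm_num : (0:ℝ) ≤ 2) hL2 (by norm_num : (0:ℝ) ≤ 2)
          have h4 : (2:ℝ) ^ (2:ℝ) = 4 := by
            rw [show (2:ℝ) = ((2:ℕ):ℝ) by norm_num, Real.rpow_natCast]; norm_num
          linarith [h4 ▸ this]
        rw [inv_le_comm₀ (by positivity) (by norm_num)]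
        linarith
      have h2 : Fq a L x ≤ (1/4) * Fq a μ x := by
        unfold Fq
        rw [Finset.mul_sum]
        refine Finset.sum_le_sum (fun i _ => ?_)
        have hle : 4 * μ ^ (2 * a i) ≤ L ^ (2 * a i) := by
          have e1 : (2 * μ) ^ (2 * a i) ≤ L ^ (2 * a i) :=
            Real.rpow_le_rpow (by positivity) hL2μ (by nlinarith [ha i])
          have e2 : (2 * μ) ^ (2 * a i) = 2 ^ (2 * a i) * μ ^ (2 * a i) :=
            Real.mul_rpow (by norm_num) hμpos.le
          have e3 : (4:ℝ) ≤ 2 ^ (2 * a i) := by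
            have := Real.rpow_le_rpow_of_exponent_le (by norm_num : (1:ℝ) ≤ 2)
              (by nlinarith [ha i] : (2:ℝ) ≤ 2 * a i)
            have h4 : (2:ℝ) ^ (2:ℝ) = 4 := by
              rw [show (2:ℝ) = ((2:ℕ):ℝ) by norm_num, Real.rpow_natCast]; norm_num
            linarith [h4 ▸ this]
          nlinarith [Real.rpow_pos_of_pos hμpos (2 * a i)]
        have hinv : (L ^ (2 * a i))⁻¹ ≤ (1/4) * (μ ^ (2 * a i))⁻¹ := by
          rw [show (1/4:ℝ) * (μ ^ (2 * a i))⁻¹ = (4 * μ ^ (2 * a i))⁻¹ by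
            rw [mul_inv]; ring]
          exact inv_anti₀ (by positivity) hle
        exact (mul_le_mul_of_nonneg_right hinv (by positivity)).trans (le_of_eq (by ring))
      rw [hμF] at h2
      linarith
    by_contra hgt
    push_neg at hgt
    have := Fq_strictAnti (hb_ge a ha) (cons1_ne_zero x) hLpos hgt
    rw [hlamF] at this
    linarith

lemma abrack_ge (x : Fin n → ℝ) : (1 + anorm a x)/2 ≤ abrack a x := by
  have h1 := one_le_abrack a ha x
  have h2 := anorm_le_abrack a ha x
  linarith

end AB
end

open Aux16 in
/-- the anisotropic bracket `⟨x⟩ = |(1,x)|_{(1,a⃗)}` is `C^∞` and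
`|∂^γ ⟨ξ⟩^α| ≤ c_γ ⟨ξ⟩^{α−a⃗·γ} ≤ c_γ′ (1+|ξ|_{a⃗})^{α−a⃗·γ}`. -/
theorem abrack_smooth_and_derivative_bounds {n : ℕ} (a : Fin n → ℝ)
    (ha : ∀ i, 1 ≤ a i) :
    ContDiff ℝ (⊤ : ℕ∞) (abrack a) ∧
    ∀ (α : ℝ) (γ : Fin n → ℕ), ∃ c c' : ℝ, 0 < c ∧ 0 < c' ∧ ∀ ξ : Fin n → ℝ,
      |pdm γ (fun x => abrack a x ^ α) ξ| ≤
          c * abrack a ξ ^ (α - ∑ i, a i * γ i) ∧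
      c * abrack a ξ ^ (α - ∑ i, a i * γ i) ≤
          c' * (1 + anorm a ξ) ^ (α - ∑ i, a i * γ i) := by
  open Aux16 in
  have hb := hb_ge a ha
  set b : Fin (n+1) → ℝ := Fin.cons 1 a with hbdef
  -- smoothness of the cons map
  have hcons : ContDiff ℝ (⊤:ℕ∞) (fun x : Fin n → ℝ => (Fin.cons 1 x : Fin (n+1) → ℝ)) := by
    apply contDiff_pi.2
    intro j
    refine Fin.cases ?_ (fun k => ?_) j
    · simp only [Fin.cons_zero]
      exact contDiff_const
    · simp only [Fin.cons_succ]
      exact contDiff_apply ℝ ℝ k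
  have hsmooth : ContDiff ℝ (⊤ : ℕ∞) (abrack a) := by
    apply contDiff_iff_contDiffAt.2
    intro x
    exact (contDiffAt_anorm hb (cons1_ne_zero x)).comp x hcons.contDiffAt
  refine ⟨hsmooth, ?_⟩
  intro α γ
  -- the function W = ρ^α and its smoothness away from 0
  set W : (Fin (n+1) → ℝ) → ℝ := fun y => anorm b y ^ α with hW
  have hWsm : Csm W := by
    intro y hy
    exact (contDiffAt_anorm hb hy).rpow_const_of_ne (ne_of_gt (anorm_root hb hy).1)
  -- compactness of the Euclidean sphere, and the sup of |Dm γ W| on it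
  set S : Set (Fin (n+1) → ℝ) := {y | ∑ j, y j ^ 2 = 1} with hS
  have hScl : IsClosed S := by
    have : Continuous (fun y : Fin (n+1) → ℝ => ∑ j, y j ^ 2) := by continuity
    exact isClosed_eq this continuous_const
  have hSsub : S ⊆ Metric.closedBall 0 1 := by
    intro y hy
    rw [Metric.mem_closedBall, dist_zero_right]
    apply pi_norm_le_iff_of_nonneg zero_le_one |>.2
    intro i
    rw [Real.norm_eq_abs, ← sq_le_one_iff_abs_le_one]
    have hterm : y i ^ 2 ≤ ∑ j, y j ^ 2 :=
      Finset.single_le_sum (f := fun j => y j ^ 2) (fun j _ => by positivity)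
        (Finset.mem_univ i)
    rw [hy] at hterm
    exact hterm
  have hScomp : IsCompact S :=
    (isCompact_closedBall 0 1).of_isClosed_subset hScl hSsub
  have hSne : ∀ y ∈ S, y ≠ (0 : Fin (n+1) → ℝ) := by
    intro y hy h0
    rw [h0] at hy
    simp [hS] at hy
  have hcontOn : ContinuousOn (Dm γ W) S := fun y hy =>
    ((hWsm.dm) y (hSne y hy)).continuousAt.continuousWithinAt
  obtain ⟨C, hC⟩ := hScomp.exists_bound_of_continuousOn hcontOn
  set c : ℝ := max C 1 with hc
  have hcpos : 0 < c := lt_of_lt_of_le one_pos (le_max_right _ _)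
  set β : ℝ := α - ∑ i, a i * γ i with hβ
  set K : ℝ := max ((2:ℝ) ^ β) ((2:ℝ) ^ (-β)) with hK
  have hKpos : 0 < K := lt_of_lt_of_le (Real.rpow_pos_of_pos two_pos β) (le_max_left _ _)
  refine ⟨c, c * K, hcpos, by positivity, ?_⟩
  intro ξ
  obtain ⟨hlampos, hlamF⟩ := abrack_root a ha ξ
  set lam : ℝ := abrack a ξ with hlam
  have hlaminv : (0:ℝ) < lam⁻¹ := by positivity
  -- the key scaling identity
  have hAcons : ∀ x : Fin n → ℝ,
      adil b lam⁻¹ (Fin.cons 1 x) = Fin.cons lam⁻¹ (adil a lam⁻¹ x) := by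
    intro x
    funext j
    refine Fin.cases ?_ (fun k => ?_) j
    · show lam⁻¹ ^ (b 0) * 1 = lam⁻¹
      rw [hbdef]
      simp [Real.rpow_one]
    · rfl
  have hWA : ∀ x : Fin n → ℝ,
      W (Fin.cons lam⁻¹ (adil a lam⁻¹ x)) = (lam⁻¹) ^ α * abrack a x ^ α := by
    intro x
    show anorm b (Fin.cons lam⁻¹ (adil a lam⁻¹ x)) ^ α = lam⁻¹ ^ α * abrack a x ^ α
    rw [← hAcons x, anorm_adil_eq hb (cons1_ne_zero x) hlaminv,
      Real.mul_rpow hlaminv.le (le_of_lt (anorm_root hb (cons1_ne_zero x)).1)]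
    rfl
  have hurepr : (fun x => abrack a x ^ α) =
      fun x => lam ^ α * W (Fin.cons lam⁻¹ (adil a lam⁻¹ x)) := by
    funext x
    rw [hWA x, ← mul_assoc, ← Real.mul_rpow hlampos.le hlaminv.le,
      mul_inv_cancel₀ (ne_of_gt hlampos), Real.one_rpow, one_mul]
  -- differentiate
  have hpdm : pdm γ (fun x => abrack a x ^ α) ξ =
      lam ^ α * ((∏ i, ((lam⁻¹) ^ (a i)) ^ (γ i)) *
        (Dm γ W) (Fin.cons lam⁻¹ (adil a lam⁻¹ ξ))) := by
    rw [hurepr, pdm_const_mul, pdm_comp_affine γ hWsm (ne_of_gt hlaminv)]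
  -- the rescaled point lies on the sphere
  have hsphere : Fin.cons lam⁻¹ (adil a lam⁻¹ ξ) ∈ S := by
    have h1 : anorm b (Fin.cons lam⁻¹ (adil a lam⁻¹ ξ)) = 1 := by
      rw [← hAcons ξ, anorm_adil_eq hb (cons1_ne_zero ξ) hlaminv]
      show lam⁻¹ * abrack a ξ = 1
      field_simp
      exact hlam.symm
    have hne : Fin.cons lam⁻¹ (adil a lam⁻¹ ξ) ≠ (0 : Fin (n+1) → ℝ) := by
      intro h
      have h0 := congrFun h 0
      simp only [Fin.cons_zero, Pi.zero_apply] at h0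
      exact (ne_of_gt hlaminv) h0
    have h2 := (anorm_root hb hne).2
    rw [h1] at h2
    rw [hS]
    simp only [Set.mem_setOf_eq]
    rw [Fq] at h2
    simp only [Real.one_rpow, inv_one, one_mul] at h2
    exact h2
  -- evaluate the product of powers
  have hprod : (∏ i, ((lam⁻¹) ^ (a i)) ^ (γ i)) = lam ^ (-(∑ i, a i * γ i)) := by
    have h1 : ∀ i, ((lam⁻¹) ^ (a i)) ^ (γ i) = (lam⁻¹) ^ (a i * γ i) := by
      intro i
      rw [← Real.rpow_natCast ((lam⁻¹) ^ (a i)) (γ i), ← Real.rpow_mul hlaminv.le]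
    simp_rw [h1]
    rw [← Real.rpow_sum_of_pos hlaminv, Real.inv_rpow hlampos.le, ← Real.rpow_neg hlampos.le]
  -- first bound
  have hbound1 : |pdm γ (fun x => abrack a x ^ α) ξ| ≤ c * lam ^ β := by
    rw [hpdm, hprod]
    have h1 : |lam ^ α * (lam ^ (-(∑ i, a i * γ i)) *
        (Dm γ W) (Fin.cons lam⁻¹ (adil a lam⁻¹ ξ)))| =
        lam ^ α * lam ^ (-(∑ i, a i * γ i)) * |(Dm γ W) (Fin.cons lam⁻¹ (adil a lam⁻¹ ξ))| := by
      rw [abs_mul, abs_mul, abs_of_pos (Real.rpow_pos_of_pos hlampos _),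
        abs_of_pos (Real.rpow_pos_of_pos hlampos _), mul_assoc]
    rw [h1, ← Real.rpow_add hlampos, (by rw [hβ]; ring : α + -(∑ i, a i * (γ i : ℝ)) = β)]
    have h2 : |(Dm γ W) (Fin.cons lam⁻¹ (adil a lam⁻¹ ξ))| ≤ c := by
      have := hC _ hsphere
      rw [Real.norm_eq_abs] at this
      exact this.trans (le_max_left _ _)
    calc lam ^ β * |(Dm γ W) (Fin.cons lam⁻¹ (adil a lam⁻¹ ξ))|
        ≤ lam ^ β * c := by
          apply mul_le_mul_of_nonneg_left h2 (Real.rpow_pos_of_pos hlampos _).le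
      _ = c * lam ^ β := by ring
  -- second bound
  have hμ : (0:ℝ) ≤ anorm a ξ := by
    rcases eq_or_ne ξ 0 with rfl | hξ
    · rw [anorm, if_pos rfl]
    · exact (anorm_root ha hξ).1.le
  set μ : ℝ := anorm a ξ with hμdef
  have h1μ : (0:ℝ) < 1 + μ := by linarith
  have hbound2 : lam ^ β ≤ K * (1 + μ) ^ β := by
    rcases le_or_gt 0 β with hβ0 | hβ0
    · have h1 : lam ^ β ≤ (2 * (1 + μ)) ^ β :=
        Real.rpow_le_rpow hlampos.le (abrack_le a ha ξ) hβ0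
      rw [Real.mul_rpow (by norm_num) h1μ.le] at h1
      exact h1.trans (mul_le_mul_of_nonneg_right (le_max_left _ _)
        (Real.rpow_nonneg h1μ.le _))
    · have h1 : lam ^ β ≤ ((1 + μ)/2) ^ β :=
        Real.rpow_le_rpow_of_nonpos (by linarith) (abrack_ge a ha ξ) hβ0.le
      have h2 : ((1 + μ)/2) ^ β = (2:ℝ) ^ (-β) * (1 + μ) ^ β := by
        rw [Real.div_rpow h1μ.le (by norm_num), Real.rpow_neg (by norm_num)]
        ring
      rw [h2] at h1
      exact h1.trans (mul_le_mul_of_nonneg_right (le_max_right _ _)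
        (Real.rpow_nonneg h1μ.le _))
  refine ⟨hbound1, ?_⟩
  calc c * lam ^ β ≤ c * (K * (1 + μ) ^ β) := mul_le_mul_of_nonneg_left hbound2 hcpos.le
    _ = c * K * (1 + μ) ^ β := by ring
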